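/- Let S be a semigroup satisfying conditions (A), (B), (C). Let a₁, a₂, b₁, b₂ ∈ S with r(a₁) = r(b₁) and r(a₂) = r(b₂), and suppose x₁, x₂, w₁, w₂ ∈ S satisfy x₁a₁ = x₂a₂, x₁b₁ = x₂b₂, w₁a₁ = w₂a₂, r(x₁) = r(x₂), l(x₁) = r(a₁), l(x₂) = r(a₂) and r(w₁) = r(w₂). Then w₁b₁ = w₂b₂. -/

import Mathlib

/-- The bicyclic semigroup `𝓑` carried by `ℕ × ℕ`, an element being `(r, l)`;
`(m,n)(p,q) = (m - n + t, q - p + t)` with `t = max n p`. -/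
structure Bicyclic where
  r : ℕ
  l : ℕ

instance : Mul Bicyclic :=
  ⟨fun x y => ⟨x.r + (max x.l y.r - x.l), y.l + (max x.l y.r - y.r)⟩⟩

/-- The inverse `(m,n)⁻¹ = (n,m)` in the bicyclic semigroup. -/
def Bicyclic.inv (x : Bicyclic) : Bicyclic := ⟨x.l, x.r⟩

/-- `T` is a left I-order in the bicyclic semigroup `𝓑`. -/
def IsLeftIOrderBic (T : Set Bicyclic) : Prop :=
  ∀ q : Bicyclic, ∃ a ∈ T, ∃ b ∈ T, q = a.inv * b

/-- `r a`, the first coordinate of `φ a` in `𝓑`. -/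
def rr {S : Type*} [Mul S] (φ : S →ₙ* Bicyclic) (a : S) : ℕ := (φ a).r

/-- `l a`, the second coordinate of `φ a` in `𝓑`. -/
def ll {S : Type*} [Mul S] (φ : S →ₙ* Bicyclic) (a : S) : ℕ := (φ a).l

/-- Condition (A): the image of `φ` is a left I-order in `𝓑`. -/
def CondA {S : Type*} [Mul S] (φ : S →ₙ* Bicyclic) : Prop :=
  IsLeftIOrderBic (Set.range (⇑φ))

/-- Condition (B)(i): if `l x, l y ≥ r a` and `x * a = y * a` then `x = y`. -/
def CondBi {S : Type*} [Mul S] (φ : S →ₙ* Bicyclic) : Prop :=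
  ∀ x y a : S, rr φ a ≤ ll φ x → rr φ a ≤ ll φ y → x * a = y * a → x = y

/-- Condition (B)(ii): if `r x, r y ≥ l a` and `a * x = a * y` then `x = y`. -/
def CondBii {S : Type*} [Mul S] (φ : S →ₙ* Bicyclic) : Prop :=
  ∀ x y a : S, ll φ a ≤ rr φ x → ll φ a ≤ rr φ y → a * x = a * y → x = y

/-- Condition (C): for all `b c` there are `x y` with `x * b = y * c`,
`r x = r y`, `l x = r b - l b + max (l b) (l c)` and
`l y = r c - l c + max (l b) (l c)`. -/
def CondC {S : Type*} [Mul S] (φ : S →ₙ* Bicyclic) : Prop :=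
  ∀ b c : S, ∃ x y : S, x * b = y * c ∧ rr φ x = rr φ y ∧
    ll φ x = rr φ b + (max (ll φ b) (ll φ c) - ll φ b) ∧
    ll φ y = rr φ c + (max (ll φ b) (ll φ c) - ll φ c)

/-!
Apply (C) to `w₁, x₁`: `x * w₁ = y * x₁` with `l x = r (w₁ * a₁) = r (w₂ * a₂)`. Both products
`y * x₂ * a₂` and `x * w₂ * a₂` equal `x * w₁ * a₁`, so (B)(i) cancels `a₂` and gives
`y * x₂ = x * w₂`. Hence `x * w₁ * b₁ = y * x₁ * b₁ = y * x₂ * b₂ = x * w₂ * b₂`, and (B)(ii)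
cancels `x`. The side conditions on `r` and `l` of both cancellations are read off the
multiplication of `𝓑`.
-/

section

variable {S : Type*} [Mul S] (φ : S →ₙ* Bicyclic)

lemma rr_mul (p q : S) : rr φ (p * q) = rr φ p + (max (ll φ p) (rr φ q) - ll φ p) := by
  simp only [rr, ll, map_mul]; rfl

lemma ll_mul (p q : S) : ll φ (p * q) = ll φ q + (max (ll φ p) (rr φ q) - rr φ q) := by
  simp only [rr, ll, map_mul]; rfl

lemma rr_mul_congr_right (w : S) {a b : S} (h : rr φ a = rr φ b) :
    rr φ (w * a) = rr φ (w * b) := by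
  rw [rr_mul, rr_mul, h]

lemma ll_le_ll_mul (p q : S) : ll φ q ≤ ll φ (p * q) := by
  rw [ll_mul]; omega

lemma rr_le_ll_mul_of_rr_mul_le {p q c : S} (h : rr φ (q * c) ≤ ll φ p) :
    rr φ c ≤ ll φ (p * q) := by
  rw [rr_mul] at h; rw [ll_mul]; omega

end

theorem stmt9_general {S : Type*} [Semigroup S] (φ : S →ₙ* Bicyclic)
    (hBi : CondBi φ) (hBii : CondBii φ) (hC : CondC φ)
    (a₁ a₂ b₁ b₂ x₁ x₂ w₁ w₂ : S)
    (ha₁ : rr φ a₁ = rr φ b₁) (ha₂ : rr φ a₂ = rr φ b₂)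
    (e₁ : x₁ * a₁ = x₂ * a₂) (e₂ : x₁ * b₁ = x₂ * b₂) (e₃ : w₁ * a₁ = w₂ * a₂)
    (hlx₁ : ll φ x₁ = rr φ a₁) (hlx₂ : ll φ x₂ = rr φ a₂) :
    w₁ * b₁ = w₂ * b₂ := by
  obtain ⟨x, y, hxy, -, hl, -⟩ := hC w₁ x₁
  have hlx : ll φ x = rr φ (w₁ * a₁) := by rw [hl, hlx₁, rr_mul]
  have hyx : y * x₂ = x * w₂ := by
    refine hBi _ _ a₂ (hlx₂ ▸ ll_le_ll_mul φ y x₂)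
      (rr_le_ll_mul_of_rr_mul_le φ (by rw [← e₃, hlx])) ?_
    calc y * x₂ * a₂ = y * x₁ * a₁ := by rw [mul_assoc, ← e₁, mul_assoc]
      _ = x * w₂ * a₂ := by rw [← hxy, mul_assoc, e₃, mul_assoc]
  refine hBii _ _ x ?_ ?_ ?_
  · rw [← rr_mul_congr_right φ w₁ ha₁, hlx]
  · rw [← rr_mul_congr_right φ w₂ ha₂, ← e₃, hlx]
  · calc x * (w₁ * b₁) = y * x₂ * b₂ := by rw [← mul_assoc, hxy, mul_assoc, e₂, mul_assoc]
      _ = x * (w₂ * b₂) := by rw [hyx, mul_assoc]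

/-- Lemma 3.3 of the paper. -/
theorem stmt9 {S : Type*} [Semigroup S] (φ : S →ₙ* Bicyclic)
    (hA : CondA φ) (hBi : CondBi φ) (hBii : CondBii φ) (hC : CondC φ)
    (a₁ a₂ b₁ b₂ x₁ x₂ w₁ w₂ : S)
    (ha₁ : rr φ a₁ = rr φ b₁) (ha₂ : rr φ a₂ = rr φ b₂)
    (e₁ : x₁ * a₁ = x₂ * a₂) (e₂ : x₁ * b₁ = x₂ * b₂) (e₃ : w₁ * a₁ = w₂ * a₂)
    (hx : rr φ x₁ = rr φ x₂) (hlx₁ : ll φ x₁ = rr φ a₁) (hlx₂ : ll φ x₂ = rr φ a₂)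
    (hw : rr φ w₁ = rr φ w₂) :
    w₁ * b₁ = w₂ * b₂ :=
  stmt9_general φ hBi hBii hC a₁ a₂ b₁ b₂ x₁ x₂ w₁ w₂ ha₁ ha₂ e₁ e₂ e₃ hlx₁ hlx₂
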